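/- arXiv:2012.05222 — 3 statements merged into one kernel-verified Lean document; each statement's English description precedes it below -/
import Mathlib

section
/- Let G be a cubic graph with girth at least 7, and let P be a geodesic (shortest path between its endpoints) in G. Then the set N(P) of vertices outside P having a neighbour on P is an independent set in G. -/
open SimpleGraph
section helpers
open Walk

variable {V : Type*} [DecidableEq V] {G : SimpleGraph V}

lemma takeUntil_geo {a b x : V} (p : G.Walk a b) (hgeo : p.length = G.dist a b)
    (hx : x ∈ p.support) :
    (p.takeUntil x hx).length = G.dist a x ∧ (p.dropUntil x hx).length = G.dist x b := by
  have hsplit := congr_arg Walk.length (p.take_spec hx)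
  rw [length_append] at hsplit
  have h1 : G.dist a x ≤ (p.takeUntil x hx).length := dist_le _
  have h2 : G.dist x b ≤ (p.dropUntil x hx).length := dist_le _
  obtain ⟨s, hs⟩ := Reachable.exists_walk_length_eq_dist ⟨p.takeUntil x hx⟩
  obtain ⟨t, ht⟩ := Reachable.exists_walk_length_eq_dist ⟨p.dropUntil x hx⟩
  have h3 : G.dist a b ≤ s.length + (p.dropUntil x hx).length := by
    have := dist_le (s.append (p.dropUntil x hx)); rwa [length_append] at this
  have h4 : G.dist a b ≤ (p.takeUntil x hx).length + G.dist x b := by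
    have := dist_le ((p.takeUntil x hx).append t); rw [length_append, ht] at this; exact this
  omega

/-- extract a geodesic subpath between two support vertices of a geodesic path -/
lemma geo_sub {a b x y : V} (p : G.Walk a b) (hp : p.IsPath) (hgeo : p.length = G.dist a b)
    (hx : x ∈ p.support) (hy : y ∈ p.support) :
    ∃ q : G.Walk x y, q.IsPath ∧ q.length = G.dist x y ∧
      ∀ z ∈ q.support, z ∈ p.support := by
  by_cases hcase : y ∈ (p.dropUntil x hx).support
  · refine ⟨(p.dropUntil x hx).takeUntil y hcase, (hp.dropUntil hx).takeUntil hcase, ?_, ?_⟩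
    · exact (takeUntil_geo _ (takeUntil_geo p hgeo hx).2 hcase).1
    · intro z hz
      exact p.support_dropUntil_subset hx (support_takeUntil_subset _ _ hz)
  · have hy' : y ∈ (p.takeUntil x hx).support := by
      rw [← p.take_spec hx, mem_support_append_iff] at hy
      tauto
    refine ⟨((p.takeUntil x hx).dropUntil y hy').reverse, ((hp.takeUntil hx).dropUntil hy').reverse,
      ?_, ?_⟩
    · rw [length_reverse, dist_comm]
      exact (takeUntil_geo _ (takeUntil_geo p hgeo hx).1 hy').2
    · intro z hz
      rw [support_reverse, List.mem_reverse] at hz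
      exact p.support_takeUntil_subset hx (support_dropUntil_subset _ _ hz)
end helpers

/-- In a cubic graph of girth at least 7, the set of external neighbours of a
geodesic path is an independent set. -/
theorem stmt_0 {V : Type*} [Fintype V] [DecidableEq V]
    (G : SimpleGraph V) [DecidableRel G.Adj]
    (hreg : G.IsRegularOfDegree 3) (hgirth : 7 ≤ G.egirth)
    {a b : V} (p : G.Walk a b) (hp : p.IsPath) (hgeo : p.length = G.dist a b)
    (u w : V)
    (hu : u ∉ p.support ∧ ∃ x ∈ p.support, G.Adj u x)
    (hw : w ∉ p.support ∧ ∃ x ∈ p.support, G.Adj w x)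
    (hne : u ≠ w) :
    ¬ G.Adj u w := by
  intro huw
  obtain ⟨hup, x, hxp, hux⟩ := hu
  obtain ⟨hwp, y, hyp, hwy⟩ := hw
  obtain ⟨q, hqpath, hqlen, hqsup⟩ := geo_sub p hp hgeo hxp hyp
  -- dist x y ≤ 3
  have hd : G.dist x y ≤ 3 := by
    have := dist_le (Walk.cons hux.symm (Walk.cons huw (Walk.cons hwy Walk.nil)))
    simpa using this
  -- the path from x to u through q, y, w
  have hyw : G.Adj y w := hwy.symm
  have hwu : G.Adj w u := huw.symm
  set P : G.Walk x u := q.append (Walk.cons hyw (Walk.cons hwu Walk.nil)) with hP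
  have hwq : w ∉ q.support := fun h => hwp (hqsup _ h)
  have huq : u ∉ q.support := fun h => hup (hqsup _ h)
  have hPpath : P.IsPath := by
    rw [Walk.isPath_def, hP, Walk.support_append]
    simp only [Walk.support_cons, Walk.support_nil, List.tail_cons]
    rw [List.nodup_append]
    refine ⟨hqpath.support_nodup, by simp [hne.symm], ?_⟩
    intro z hz
    simp only [List.mem_cons, List.not_mem_nil, or_false]
    rintro b (rfl | rfl) rfl
    · exact hwq hz
    · exact huq hz
  have hedge : s(u, x) ∉ P.edges := by
    rw [hP, Walk.edges_append]
    simp only [Walk.edges_cons, Walk.edges_nil, List.mem_append, List.mem_cons,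
      List.not_mem_nil, or_false]
    rintro (h | h | h)
    · exact huq (Walk.fst_mem_support_of_mem_edges q h)
    · rw [Sym2.eq_iff] at h
      rcases h with ⟨rfl, rfl⟩ | ⟨rfl, rfl⟩
      · exact hup hyp
      · exact hne rfl
    · rw [Sym2.eq_iff] at h
      rcases h with ⟨rfl, rfl⟩ | ⟨_, rfl⟩
      · exact hne rfl
      · exact hwp hxp
  have hcyc : (Walk.cons hux P).IsCycle := (Walk.cons_isCycle_iff P hux).2 ⟨hPpath, hedge⟩
  have hlen : (Walk.cons hux P).length ≤ 6 := by
    rw [Walk.length_cons, hP, Walk.length_append]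
    simp only [Walk.length_cons, Walk.length_nil]
    omega
  have h7 := le_egirth.mp hgirth _ _ hcyc
  have : ((Walk.cons hux P).length : ℕ∞) ≤ 6 := by exact_mod_cast hlen
  have : (7 : ℕ∞) ≤ 6 := le_trans h7 this
  norm_num at this
end

section
/- Let G be a cubic graph and Q = (q_1,...,q_{15}) a geodesic of length 14 with distinct external neighbours r_2,...,r_{14}. If r_ir_{i+1} is an edge for all 3 ≤ i ≤ 10, then for each 4 ≤ i ≤ 10 the neighbourhood of r_i is exactly {q_i, r_{i-1}, r_{i+1}}, and hence the path (q_2, q_3, q_4, r_4, r_5, ..., r_{10}) is an induced path in G. -/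
open SimpleGraph

lemma walkTo' {V : Type*} {G : SimpleGraph V} {a b : V} (p : G.Walk a b) (i : ℕ) :
    ∃ w : G.Walk a (p.getVert i), w.length ≤ i := by
  induction p generalizing i with
  | nil => exact ⟨Walk.nil, Nat.zero_le _⟩
  | cons h q ih =>
    cases i with
    | zero => exact ⟨Walk.nil, Nat.zero_le _⟩
    | succ n =>
      obtain ⟨w, hw⟩ := ih n
      exact ⟨Walk.cons h w, by simpa using hw⟩

lemma walkFrom' {V : Type*} {G : SimpleGraph V} {a b : V} (p : G.Walk a b) (i : ℕ) :
    ∃ w : G.Walk (p.getVert i) b, w.length ≤ p.length - i := by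
  induction p generalizing i with
  | nil => exact ⟨Walk.nil, Nat.zero_le _⟩
  | cons h q ih =>
    cases i with
    | zero => exact ⟨Walk.cons h q, Nat.le_of_eq (Nat.sub_zero _).symm⟩
    | succ n =>
      obtain ⟨w, hw⟩ := ih n
      exact ⟨w, by simpa using hw⟩

/-- Let `Q = (q_1, ..., q_15)` be a geodesic of length 14 in a cubic graph with
distinct external neighbours `r_2, ..., r_14` of its internal vertices (here
`q_i = p.getVert (i - 1)`). If `r_i r_{i+1}` is an edge for all `3 ≤ i ≤ 10`,
then for each `4 ≤ i ≤ 10` the neighbourhood of `r_i` is exactly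
`{q_i, r_{i-1}, r_{i+1}}`, and the path `(q_2, q_3, q_4, r_4, r_5, ..., r_10)`
is an induced path in `G`. -/
theorem stmt_18 {V : Type*} [Fintype V] [DecidableEq V]
    (G : SimpleGraph V) [DecidableRel G.Adj]
    (hreg : G.IsRegularOfDegree 3)
    {a b : V} (p : G.Walk a b) (hp : p.IsPath)
    (hlen : p.length = 14) (hgeo : G.dist a b = 14)
    (r : ℕ → V)
    (hr : ∀ i, 2 ≤ i → i ≤ 14 → G.Adj (p.getVert (i - 1)) (r i) ∧ r i ∉ p.support)
    (hdistinct : ∀ i j, 2 ≤ i → i ≤ 14 → 2 ≤ j → j ≤ 14 → r i = r j → i = j)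
    (hedges : ∀ i, 3 ≤ i → i ≤ 10 → G.Adj (r i) (r (i + 1))) :
    (∀ i, 4 ≤ i → i ≤ 10 → ∀ x : V, G.Adj (r i) x ↔
      (x = p.getVert (i - 1) ∨ x = r (i - 1) ∨ x = r (i + 1))) ∧
    (let f : Fin 10 → V :=
      fun k => if k.val ≤ 2 then p.getVert (k.val + 1) else r (k.val + 1)
     Function.Injective f ∧
       ∀ k l : Fin 10, G.Adj (f k) (f l) ↔
         (k.val + 1 = l.val ∨ l.val + 1 = k.val)) := by
  -- membership of getVert in support
  have hmem : ∀ n : ℕ, n ≤ 14 → p.getVert n ∈ p.support := by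
    intro n hn
    exact Walk.mem_support_iff_exists_getVert.mpr ⟨n, rfl, by omega⟩
  -- injectivity of getVert up to 14
  have hinj : ∀ i j : ℕ, i ≤ 14 → j ≤ 14 → p.getVert i = p.getVert j → i = j := by
    have key : ∀ i j : ℕ, i < j → j ≤ 14 → p.getVert i ≠ p.getVert j := by
      intro i j hij hj heq
      obtain ⟨w1, hw1⟩ := walkTo' p i
      obtain ⟨w2, hw2⟩ := walkFrom' p j
      have := G.dist_le (w1.append (w2.copy heq.symm rfl))
      rw [Walk.length_append, Walk.length_copy, hgeo] at this
      rw [hlen] at hw2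
      omega
    intro i j hi hj heq
    rcases lt_trichotomy i j with h | h | h
    · exact absurd heq (key i j h hj)
    · exact h
    · exact absurd heq.symm (key j i h hi)
  -- no chords among getVerts
  have hchord : ∀ i j : ℕ, i + 1 < j → j ≤ 14 → ¬ G.Adj (p.getVert i) (p.getVert j) := by
    intro i j hij hj hadj
    obtain ⟨w1, hw1⟩ := walkTo' p i
    obtain ⟨w2, hw2⟩ := walkFrom' p j
    have := G.dist_le (w1.append (Walk.cons hadj w2))
    rw [Walk.length_append, Walk.length_cons, hgeo] at this
    rw [hlen] at hw2
    omega
  -- Part 1: neighbourhoods of r i for 4 ≤ i ≤ 10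
  have P1 : ∀ i, 4 ≤ i → i ≤ 10 → ∀ x : V, G.Adj (r i) x ↔
      (x = p.getVert (i - 1) ∨ x = r (i - 1) ∨ x = r (i + 1)) := by
    intro i hi4 hi10 x
    have hA : G.Adj (r i) (p.getVert (i - 1)) := (hr i (by omega) (by omega)).1.symm
    have hB : G.Adj (r i) (r (i - 1)) := by
      have := hedges (i - 1) (by omega) (by omega)
      have h1 : i - 1 + 1 = i := by omega
      rw [h1] at this
      exact this.symm
    have hC : G.Adj (r i) (r (i + 1)) := hedges i (by omega) hi10
    have hqmem : p.getVert (i - 1) ∈ p.support := hmem (i - 1) (by omega)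
    have hAB : p.getVert (i - 1) ≠ r (i - 1) := fun h =>
      (hr (i - 1) (by omega) (by omega)).2 (h ▸ hqmem)
    have hAC : p.getVert (i - 1) ≠ r (i + 1) := fun h =>
      (hr (i + 1) (by omega) (by omega)).2 (h ▸ hqmem)
    have hBC : r (i - 1) ≠ r (i + 1) := fun h => by
      have := hdistinct (i - 1) (i + 1) (by omega) (by omega) (by omega) (by omega) h
      omega
    have hsub : ({p.getVert (i - 1), r (i - 1), r (i + 1)} : Finset V) ⊆
        G.neighborFinset (r i) := by
      intro y hy
      simp only [Finset.mem_insert, Finset.mem_singleton] at hy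
      rw [mem_neighborFinset]
      rcases hy with h | h | h <;> subst h
      · exact hA
      · exact hB
      · exact hC
    have hcard3 : ({p.getVert (i - 1), r (i - 1), r (i + 1)} : Finset V).card = 3 := by
      rw [Finset.card_insert_of_notMem (by simp [hAB, hAC]),
        Finset.card_insert_of_notMem (by simp [hBC]), Finset.card_singleton]
    have hdeg : (G.neighborFinset (r i)).card = 3 := hreg (r i)
    have heq : ({p.getVert (i - 1), r (i - 1), r (i + 1)} : Finset V) =
        G.neighborFinset (r i) :=
      Finset.eq_of_subset_of_card_le hsub (by rw [hdeg, hcard3])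
    constructor
    · intro hadj
      have : x ∈ G.neighborFinset (r i) := (mem_neighborFinset _ _ _).mpr hadj
      rw [← heq] at this
      simpa using this
    · intro hx
      have : x ∈ ({p.getVert (i - 1), r (i - 1), r (i + 1)} : Finset V) := by
        simpa using hx
      rw [heq, mem_neighborFinset] at this
      exact this
  refine ⟨P1, ?_⟩
  dsimp only
  have hrmem : ∀ n : ℕ, 2 ≤ n → n ≤ 14 → r n ∉ p.support := fun n h1 h2 => (hr n h1 h2).2
  constructor
  · -- injectivity of f
    intro k l h
    by_cases hk : k.val ≤ 2 <;> by_cases hl : l.val ≤ 2 <;>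
      simp only [hk, hl, if_pos, if_neg, if_true, if_false] at h
    · exact Fin.ext (by have := hinj (k.val + 1) (l.val + 1) (by omega) (by omega) h; omega)
    · exact absurd (h ▸ hmem (k.val + 1) (by omega))
        (hrmem (l.val + 1) (by omega) (by omega))
    · exact absurd (h.symm ▸ hmem (l.val + 1) (by omega))
        (hrmem (k.val + 1) (by omega) (by omega))
    · exact Fin.ext (by
        have := hdistinct (k.val + 1) (l.val + 1) (by omega) (by omega) (by omega)
          (by omega) h
        omega)
  · -- adjacency iff consecutive
    intro k l
    constructor
    · intro hadj
      by_cases hk : k.val ≤ 2 <;> by_cases hl : l.val ≤ 2 <;>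
        simp only [hk, hl, if_pos, if_neg, if_true, if_false] at hadj
      · -- both on the path
        have hne : k.val ≠ l.val := by
          intro h
          exact G.irrefl (by rwa [show (k.val : ℕ) = l.val from h] at hadj)
        rcases Nat.lt_or_ge k.val l.val with h | h
        · left
          by_contra hc
          exact hchord (k.val + 1) (l.val + 1) (by omega) (by omega) hadj
        · right
          by_contra hc
          exact hchord (l.val + 1) (k.val + 1) (by omega) (by omega) hadj.symm
      · -- path vertex adjacent to r (l+1)
        have := (P1 (l.val + 1) (by omega) (by omega) (p.getVert (k.val + 1))).mp hadj.symm
        rcases this with h | h | h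
        · left
          have h1 : l.val + 1 - 1 = l.val := by omega
          rw [h1] at h
          have := hinj (k.val + 1) l.val (by omega) (by omega) h
          omega
        · exact absurd (h ▸ hmem (k.val + 1) (by omega))
            (hrmem (l.val + 1 - 1) (by omega) (by omega))
        · exact absurd (h ▸ hmem (k.val + 1) (by omega))
            (hrmem (l.val + 1 + 1) (by omega) (by omega))
      · -- r (k+1) adjacent to path vertex
        have := (P1 (k.val + 1) (by omega) (by omega) (p.getVert (l.val + 1))).mp hadj
        rcases this with h | h | h
        · right
          have h1 : k.val + 1 - 1 = k.val := by omega
          rw [h1] at h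
          have := hinj (l.val + 1) k.val (by omega) (by omega) h
          omega
        · exact absurd (h ▸ hmem (l.val + 1) (by omega))
            (hrmem (k.val + 1 - 1) (by omega) (by omega))
        · exact absurd (h ▸ hmem (l.val + 1) (by omega))
            (hrmem (k.val + 1 + 1) (by omega) (by omega))
      · -- both r's
        have := (P1 (k.val + 1) (by omega) (by omega) (r (l.val + 1))).mp hadj
        rcases this with h | h | h
        · exact absurd (h ▸ hrmem (l.val + 1) (by omega) (by omega))
            (fun hcon => hcon (hmem (k.val + 1 - 1) (by omega)))
        · right
          have := hdistinct (l.val + 1) (k.val + 1 - 1) (by omega) (by omega) (by omega)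
            (by omega) h
          omega
        · left
          have := hdistinct (l.val + 1) (k.val + 1 + 1) (by omega) (by omega) (by omega)
            (by omega) h
          omega
    · -- consecutive implies adjacent
      have step : ∀ k l : Fin 10, k.val + 1 = l.val →
          G.Adj (if k.val ≤ 2 then p.getVert (k.val + 1) else r (k.val + 1))
                (if l.val ≤ 2 then p.getVert (l.val + 1) else r (l.val + 1)) := by
        intro k l hkl
        by_cases hk : k.val ≤ 2 <;> by_cases hl : l.val ≤ 2 <;>
          simp only [hk, hl, if_pos, if_neg, if_true, if_false]
        · have : l.val + 1 = (k.val + 1) + 1 := by omega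
          rw [this]
          exact p.adj_getVert_succ (by omega)
        · -- k = 2, l = 3 : q_4 ~ r_4
          have hk2 : k.val = 2 := by omega
          have hl3 : l.val = 3 := by omega
          rw [hk2, hl3]
          exact (hr 4 (by omega) (by omega)).1
        · omega
        · have : l.val + 1 = (k.val + 1) + 1 := by omega
          rw [this]
          exact hedges (k.val + 1) (by omega) (by omega)
      intro h
      rcases h with h | h
      · exact step k l h
      · exact (step l k h).symm
end

section
/- Let X_1, ..., X_n be independent random variables where X_k takes values in a finite set A_k, and let f be a real-valued function on the product of the A_k such that |f(x) - f(x')| ≤ c whenever x and x' differ in a single coordinate. Then for any m ≥ 0, P(|f(X) - E[f(X)]| ≥ m) ≤ 2 exp(-2m²/(c²n)). -/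
open MeasureTheory

open Real

lemma mcd_q_pos {p : ℝ} (hp0 : 0 ≤ p) (hp1 : p ≤ 1) (h : ℝ) :
    0 < 1 - p + p * exp h := by
  rcases eq_or_lt_of_le hp0 with h0 | h0
  · simp [← h0]
  · have := exp_pos h
    nlinarith

lemma mcd_aux_ineq {p : ℝ} (hp0 : 0 ≤ p) (hp1 : p ≤ 1) (h : ℝ) :
    1 - p + p * exp h ≤ exp (p * h + h ^ 2 / 8) := by
  set q : ℝ → ℝ := fun x => 1 - p + p * exp x with hq
  have hqpos : ∀ x, 0 < q x := fun x => mcd_q_pos hp0 hp1 x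
  set F : ℝ → ℝ := fun x => p * x + x ^ 2 / 8 - log (q x) with hF
  set G : ℝ → ℝ := fun x => p + x / 4 - p * exp x / q x with hG
  have hqd : ∀ x, HasDerivAt q (p * exp x) x := by
    intro x
    exact ((hasDerivAt_exp x).const_mul p).const_add (1 - p)
  have hFd : ∀ x, HasDerivAt F (G x) x := by
    intro x
    have hl : HasDerivAt (fun y => log (q y)) (p * exp x / q x) x :=
      (hqd x).log (hqpos x).ne'
    have h1 : HasDerivAt (fun y : ℝ => p * y + y ^ 2 / 8) (p + x * 2 / 8) x := by
      have := ((hasDerivAt_pow 2 x).div_const 8).const_add (p * x)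
      have h2 : HasDerivAt (fun y : ℝ => p * y) p x := by
        simpa using (hasDerivAt_id x).const_mul p
      exact (h2.add ((hasDerivAt_pow 2 x).div_const 8)).congr_deriv (by ring)
    have := h1.sub hl
    refine this.congr_deriv ?_
    show _ = p + x / 4 - p * exp x / q x
    ring
  have hGd : ∀ x, HasDerivAt G (1 / 4 - (p * exp x * (1 - p)) / (q x) ^ 2) x := by
    intro x
    have hdiv : HasDerivAt (fun y => p * exp y / q y)
        ((p * exp x * q x - p * exp x * (p * exp x)) / (q x) ^ 2) x :=
      ((hasDerivAt_exp x).const_mul p).div (hqd x) (hqpos x).ne'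
    have h1 : HasDerivAt (fun y : ℝ => p + y / 4) (1 / 4) x := by
      simpa using ((hasDerivAt_id x).div_const 4).const_add p
    have key : p * exp x * q x - p * exp x * (p * exp x) = p * exp x * (1 - p) := by
      simp only [hq]; ring
    rw [key] at hdiv
    exact h1.sub hdiv
  have hGderiv_nonneg : ∀ x, 0 ≤ 1 / 4 - (p * exp x * (1 - p)) / (q x) ^ 2 := by
    intro x
    have hqx := hqpos x
    have hu0 : 0 ≤ p * exp x / q x := by positivity
    have hu1 : p * exp x / q x ≤ 1 := by
      rw [div_le_one hqx]; simp [hq]; nlinarith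
    set u := p * exp x / q x with hu
    have : (p * exp x * (1 - p)) / (q x) ^ 2 = u * (1 - u) := by
      rw [hu]
      field_simp
      ring
    rw [this]
    nlinarith [sq_nonneg (u - 1/2)]
  have hGmono : Monotone G := by
    apply monotone_of_deriv_nonneg
    · exact fun x => (hGd x).differentiableAt
    · intro x
      rw [(hGd x).deriv]
      exact hGderiv_nonneg x
  have hG0 : G 0 = 0 := by
    simp [hG, hq]
  have hFdiff : Differentiable ℝ F := fun x => (hFd x).differentiableAt
  have hF0 : F 0 = 0 := by simp [hF, hq]
  have hFnonneg : ∀ x, 0 ≤ F x := by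
    intro x
    rcases le_total 0 x with hx | hx
    · have : MonotoneOn F (Set.Ici 0) := by
        apply monotoneOn_of_deriv_nonneg (convex_Ici 0) (hFdiff.continuous.continuousOn)
          (hFdiff.differentiableOn)
        intro y hy
        rw [interior_Ici] at hy
        rw [(hFd y).deriv]
        calc (0:ℝ) = G 0 := hG0.symm
        _ ≤ G y := hGmono (le_of_lt hy)
      have := this (Set.self_mem_Ici) (Set.mem_Ici.2 hx) hx
      rwa [hF0] at this
    · have : AntitoneOn F (Set.Iic 0) := by
        apply antitoneOn_of_deriv_nonpos (convex_Iic 0) (hFdiff.continuous.continuousOn)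
          (hFdiff.differentiableOn)
        intro y hy
        rw [interior_Iic] at hy
        rw [(hFd y).deriv]
        calc G y ≤ G 0 := hGmono (le_of_lt hy)
        _ = 0 := hG0
      have := this (Set.mem_Iic.2 hx) (Set.self_mem_Iic) hx
      rwa [hF0] at this
  have := hFnonneg h
  have hlog : log (q h) ≤ p * h + h ^ 2 / 8 := by
    simp only [hF] at this
    linarith
  calc q h = exp (log (q h)) := (exp_log (hqpos h)).symm
  _ ≤ exp (p * h + h ^ 2 / 8) := exp_le_exp.2 hlog

lemma mcd_hoeffding {B : Type*} [Fintype B] [Nonempty B] (w : B → ℝ) (hw : ∀ a, 0 ≤ w a)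
    (hw1 : ∑ a, w a = 1) (g : B → ℝ) (c : ℝ) (hc : 0 ≤ c)
    (hg : ∀ a b, |g a - g b| ≤ c) (t : ℝ) :
    ∑ a, w a * exp (t * g a) ≤ exp (t * (∑ a, w a * g a) + t ^ 2 * c ^ 2 / 8) := by
  obtain ⟨a0, -, ha0⟩ := Finset.exists_min_image Finset.univ g ⟨Classical.arbitrary B, Finset.mem_univ _⟩
  obtain ⟨b0, -, hb0⟩ := Finset.exists_max_image Finset.univ g ⟨Classical.arbitrary B, Finset.mem_univ _⟩
  set a := g a0 with ha
  set b := g b0 with hb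
  have hle : ∀ x, a ≤ g x ∧ g x ≤ b := fun x => ⟨ha0 x (Finset.mem_univ x), hb0 x (Finset.mem_univ x)⟩
  have hab : a ≤ b := (hle a0).2
  have hbac : b - a ≤ c := by
    have := hg b0 a0
    rw [abs_of_nonneg (by linarith)] at this
    linarith
  set m := ∑ x, w x * g x with hm
  have hma : a ≤ m := by
    calc a = ∑ x, w x * a := by rw [← Finset.sum_mul, hw1, one_mul]
    _ ≤ m := Finset.sum_le_sum fun x _ => mul_le_mul_of_nonneg_left (hle x).1 (hw x)
  have hmb : m ≤ b := by
    calc m ≤ ∑ x, w x * b := Finset.sum_le_sum fun x _ => mul_le_mul_of_nonneg_left (hle x).2 (hw x)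
    _ = b := by rw [← Finset.sum_mul, hw1, one_mul]
  have hrhs_mono : exp (t * m) ≤ exp (t * m + t ^ 2 * c ^ 2 / 8) := by
    apply exp_le_exp.2; nlinarith [sq_nonneg t, sq_nonneg c]
  rcases eq_or_lt_of_le hab with heq | hlt
  · have hgm : ∀ x, g x = m := by
      have hga : ∀ x, g x = a := fun x => le_antisymm (heq ▸ (hle x).2) (hle x).1
      have hma' : m = a := by simp only [hm, hga, ← Finset.sum_mul, hw1, one_mul]
      intro x; rw [hga x, hma']
    calc ∑ x, w x * exp (t * g x) = ∑ x, w x * exp (t * m) := by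
          apply Finset.sum_congr rfl; intro x _; rw [hgm x]
    _ = exp (t * m) := by rw [← Finset.sum_mul, hw1, one_mul]
    _ ≤ _ := hrhs_mono
  · have hba : 0 < b - a := by linarith
    have hpt : ∀ x, exp (t * g x) ≤
        ((b - g x) / (b - a)) * exp (t * a) + ((g x - a) / (b - a)) * exp (t * b) := by
      intro x
      have h1 : (0:ℝ) ≤ (b - g x) / (b - a) := div_nonneg (by linarith [(hle x).2]) hba.le
      have h2 : (0:ℝ) ≤ (g x - a) / (b - a) := div_nonneg (by linarith [(hle x).1]) hba.le
      have h3 : (b - g x) / (b - a) + (g x - a) / (b - a) = 1 := by field_simp; ring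
      have := convexOn_exp.2 (Set.mem_univ (t * a)) (Set.mem_univ (t * b)) h1 h2 h3
      simp only [smul_eq_mul] at this
      refine le_trans (le_of_eq (congrArg exp ?_)) this
      rw [div_mul_eq_mul_div, div_mul_eq_mul_div, ← add_div, eq_div_iff hba.ne']
      ring
    have key1 : ∑ x, w x * (b - g x) = b - m := by
      simp only [mul_sub]
      rw [Finset.sum_sub_distrib, ← Finset.sum_mul, hw1, one_mul, ← hm]
    have key2 : ∑ x, w x * (g x - a) = m - a := by
      simp only [mul_sub]
      rw [Finset.sum_sub_distrib, ← Finset.sum_mul, hw1, one_mul, ← hm]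
    have hsum : ∑ x, w x * exp (t * g x) ≤
        ((b - m) / (b - a)) * exp (t * a) + ((m - a) / (b - a)) * exp (t * b) := by
      calc ∑ x, w x * exp (t * g x)
          ≤ ∑ x, w x * (((b - g x) / (b - a)) * exp (t * a) + ((g x - a) / (b - a)) * exp (t * b)) :=
            Finset.sum_le_sum fun x _ => mul_le_mul_of_nonneg_left (hpt x) (hw x)
      _ = ∑ x, ((w x * (b - g x)) * (exp (t * a) / (b - a)) +
              (w x * (g x - a)) * (exp (t * b) / (b - a))) := by
            apply Finset.sum_congr rfl; intro x _; ring
      _ = (∑ x, w x * (b - g x)) * (exp (t * a) / (b - a)) +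
              (∑ x, w x * (g x - a)) * (exp (t * b) / (b - a)) := by
            rw [Finset.sum_add_distrib, ← Finset.sum_mul, ← Finset.sum_mul]
      _ = ((b - m) / (b - a)) * exp (t * a) + ((m - a) / (b - a)) * exp (t * b) := by
            rw [key1, key2]; ring
    set p := (m - a) / (b - a) with hp
    have hp0 : 0 ≤ p := div_nonneg (by linarith) hba.le
    have hp1 : p ≤ 1 := by rw [div_le_one hba]; linarith
    set hh := t * (b - a) with hhh
    have heqform : ((b - m) / (b - a)) * exp (t * a) + ((m - a) / (b - a)) * exp (t * b)
        = exp (t * a) * (1 - p + p * exp hh) := by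
      have he : exp (t * b) = exp (t * a) * exp hh := by
        rw [← exp_add]; congr 1; ring
      have h1p : (b - m) / (b - a) = 1 - p := by
        rw [hp, eq_sub_iff_add_eq, ← add_div, div_eq_one_iff_eq hba.ne']
        ring
      rw [he, h1p]; ring
    have hfin : exp (t * a) * (1 - p + p * exp hh) ≤ exp (t * m + t ^ 2 * c ^ 2 / 8) := by
      calc exp (t * a) * (1 - p + p * exp hh)
          ≤ exp (t * a) * exp (p * hh + hh ^ 2 / 8) :=
            mul_le_mul_of_nonneg_left (mcd_aux_ineq hp0 hp1 hh) (exp_pos _).le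
      _ = exp (t * a + p * hh + hh ^ 2 / 8) := by rw [← exp_add]; ring_nf
      _ ≤ exp (t * m + t ^ 2 * c ^ 2 / 8) := by
            apply exp_le_exp.2
            have hph : p * hh = (m - a) * t := by
              rw [hp, hhh]; field_simp
            rw [hph, hhh]
            have h1 : (t * (b - a)) ^ 2 ≤ t ^ 2 * c ^ 2 := by
              rw [mul_pow]
              apply mul_le_mul_of_nonneg_left _ (sq_nonneg t)
              apply sq_le_sq' (by linarith) hbac
            linarith
    calc ∑ x, w x * exp (t * g x) ≤ _ := hsum
    _ = _ := heqform
    _ ≤ _ := hfin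

universe u

lemma mcd_mgf : ∀ (n : ℕ) (A : Fin n → Type u) [∀ k, Fintype (A k)] [∀ k, Nonempty (A k)]
    (w : ∀ k, A k → ℝ), (∀ k a, 0 ≤ w k a) → (∀ k, ∑ a, w k a = 1) →
    ∀ (f : (∀ k, A k) → ℝ) (c : ℝ), 0 ≤ c →
    (∀ (x x' : ∀ k, A k) (k : Fin n), (∀ j, j ≠ k → x j = x' j) → |f x - f x'| ≤ c) →
    ∀ t : ℝ, ∑ x, (∏ k, w k (x k)) * exp (t * f x) ≤
      exp (t * (∑ x, (∏ k, w k (x k)) * f x) + t ^ 2 * c ^ 2 * n / 8) := by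
  intro n
  induction n with
  | zero =>
    intro A _ _ w hw hw1 f c hc hf t
    simp only [Nat.cast_zero, mul_zero, zero_div, add_zero]
    rw [Fintype.sum_unique, Fintype.sum_unique]
    simp
  | succ n ih =>
    intro A _ _ w hw hw1 f c hc hf t
    have hconv : ∀ (F : (∀ k : Fin (n+1), A k) → ℝ),
        ∑ x, F x = ∑ a : A 0, ∑ y : (∀ k : Fin n, A k.succ), F (Fin.cons a y) := by
      intro F
      rw [← Fintype.sum_equiv (Fin.consEquiv A) (fun q => F (Fin.consEquiv A q)) F (fun q => rfl)]
      rw [Fintype.sum_prod_type]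
      rfl
    have hW : ∀ (a : A 0) (y : ∀ k : Fin n, A k.succ),
        (∏ k : Fin (n+1), w k (Fin.cons a y k)) = w 0 a * ∏ k : Fin n, w k.succ (y k) := by
      intro a y
      rw [Fin.prod_univ_succ]
      simp [Fin.cons_succ, Fin.cons_zero]
    set W' : (∀ k : Fin n, A k.succ) → ℝ := fun y => ∏ k : Fin n, w k.succ (y k) with hW'
    have hW'nonneg : ∀ y, 0 ≤ W' y := fun y => Finset.prod_nonneg fun k _ => hw k.succ (y k)
    set g : (∀ k : Fin n, A k.succ) → ℝ := fun y => ∑ a, w 0 a * f (Fin.cons a y) with hg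
    -- Hoeffding step for each fixed y
    have hstep : ∀ y, ∑ a, w 0 a * exp (t * f (Fin.cons a y)) ≤
        exp (t * g y + t ^ 2 * c ^ 2 / 8) := by
      intro y
      exact mcd_hoeffding (w 0) (hw 0) (hw1 0) (fun a => f (Fin.cons a y)) c hc
        (fun a b => hf (Fin.cons a y) (Fin.cons b y) 0 (by
          intro j hj
          rcases Fin.eq_zero_or_eq_succ j with h0 | ⟨i, rfl⟩
          · exact absurd h0 hj
          · simp [Fin.cons_succ])) t
    -- g has bounded differences
    have hgbd : ∀ (y y' : ∀ k : Fin n, A k.succ) (k : Fin n),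
        (∀ j, j ≠ k → y j = y' j) → |g y - g y'| ≤ c := by
      intro y y' k hyy
      have : g y - g y' = ∑ a, w 0 a * (f (Fin.cons a y) - f (Fin.cons a y')) := by
        simp only [hg, mul_sub, Finset.sum_sub_distrib]
      rw [this]
      calc |∑ a, w 0 a * (f (Fin.cons a y) - f (Fin.cons a y'))|
          ≤ ∑ a, |w 0 a * (f (Fin.cons a y) - f (Fin.cons a y'))| :=
            Finset.abs_sum_le_sum_abs _ _
      _ ≤ ∑ a, w 0 a * c := by
            apply Finset.sum_le_sum
            intro a _
            rw [abs_mul, abs_of_nonneg (hw 0 a)]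
            apply mul_le_mul_of_nonneg_left _ (hw 0 a)
            apply hf _ _ k.succ
            intro j hj
            rcases Fin.eq_zero_or_eq_succ j with h0 | ⟨i, rfl⟩
            · subst h0; simp [Fin.cons_zero]
            · have hik : i ≠ k := fun h => hj (by rw [h])
              simp only [Fin.cons_succ]
              exact hyy i hik
      _ = c := by rw [← Finset.sum_mul, hw1 0, one_mul]
    -- IH for g
    have hih := ih (fun k => A k.succ) (fun k => w k.succ) (fun k a => hw k.succ a)
      (fun k => hw1 k.succ) g c hc hgbd t
    -- mean equality
    have hmean : ∑ y, W' y * g y = ∑ x, (∏ k, w k (x k)) * f x := by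
      rw [hconv (fun x => (∏ k, w k (x k)) * f x)]
      rw [Finset.sum_comm]
      apply Finset.sum_congr rfl
      intro y _
      simp only [hg, Finset.mul_sum]
      apply Finset.sum_congr rfl
      intro a _
      rw [hW a y]
      ring
    calc ∑ x, (∏ k, w k (x k)) * exp (t * f x)
        = ∑ a, ∑ y, (w 0 a * W' y) * exp (t * f (Fin.cons a y)) := by
          rw [hconv (fun x => (∏ k, w k (x k)) * exp (t * f x))]
          apply Finset.sum_congr rfl; intro a _
          apply Finset.sum_congr rfl; intro y _
          rw [hW a y]
    _ = ∑ y, W' y * ∑ a, w 0 a * exp (t * f (Fin.cons a y)) := by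
          rw [Finset.sum_comm]
          apply Finset.sum_congr rfl; intro y _
          rw [Finset.mul_sum]
          apply Finset.sum_congr rfl; intro a _
          ring
    _ ≤ ∑ y, W' y * exp (t * g y + t ^ 2 * c ^ 2 / 8) :=
          Finset.sum_le_sum fun y _ => mul_le_mul_of_nonneg_left (hstep y) (hW'nonneg y)
    _ = (∑ y, W' y * exp (t * g y)) * exp (t ^ 2 * c ^ 2 / 8) := by
          rw [Finset.sum_mul]
          apply Finset.sum_congr rfl; intro y _
          rw [exp_add]; ring
    _ ≤ exp (t * (∑ y, W' y * g y) + t ^ 2 * c ^ 2 * n / 8) * exp (t ^ 2 * c ^ 2 / 8) :=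
          mul_le_mul_of_nonneg_right hih (exp_pos _).le
    _ = exp (t * (∑ x, (∏ k, w k (x k)) * f x) + t ^ 2 * c ^ 2 * (n + 1 : ℕ) / 8) := by
          rw [← exp_add, hmean]
          congr 1
          push_cast
          ring

/-- McDiarmid's bounded differences inequality: if `f` is a function of `n`
independent random variables (with finite ranges) that changes by at most `c`
when a single coordinate is changed, then `f` deviates from its mean by at
least `m` with probability at most `2 exp(-2 m² / (c² n))`. -/
theorem stmt_19 (n : ℕ) (A : Fin n → Type*)
    [∀ k, Fintype (A k)] [∀ k, Nonempty (A k)]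
    [∀ k, MeasurableSpace (A k)] [∀ k, DiscreteMeasurableSpace (A k)]
    (μ : ∀ k, Measure (A k)) [∀ k, IsProbabilityMeasure (μ k)]
    (f : (∀ k, A k) → ℝ) (c : ℝ) (hc : 0 < c)
    (hf : ∀ (x x' : ∀ k, A k) (k : Fin n),
      (∀ j, j ≠ k → x j = x' j) → |f x - f x'| ≤ c)
    (m : ℝ) (hm : 0 ≤ m) :
    (Measure.pi μ) {x | m ≤ |f x - ∫ y, f y ∂(Measure.pi μ)|} ≤
      ENNReal.ofReal (2 * Real.exp (-2 * m ^ 2 / (c ^ 2 * n))) := by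
  set ν := Measure.pi μ with hν
  have hprob : IsProbabilityMeasure ν := inferInstance
  -- weights
  set w : ∀ k, A k → ℝ := fun k a => ((μ k) {a}).toReal with hw_def
  have hw : ∀ k a, 0 ≤ w k a := fun k a => ENNReal.toReal_nonneg
  have hw1 : ∀ k, ∑ a, w k a = 1 := by
    intro k
    have h1 := integral_fintype (μ := μ k) (f := fun _ : A k => (1:ℝ)) (Integrable.of_finite)
    simp only [integral_const, probReal_univ, ENNReal.toReal_one, smul_eq_mul, mul_one,
      one_smul] at h1
    exact h1.symm
  -- integral as weighted sum
  have hsing : ∀ x : ∀ k, A k, ν {x} = ∏ k, (μ k) {x k} := by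
    intro x
    rw [hν, ← Set.univ_pi_singleton, Measure.pi_pi]
  have hint : ∀ g : (∀ k, A k) → ℝ,
      ∫ x, g x ∂ν = ∑ x, (∏ k, w k (x k)) * g x := by
    intro g
    rw [integral_fintype (Integrable.of_finite)]
    apply Finset.sum_congr rfl
    intro x _
    rw [smul_eq_mul, measureReal_def, hsing x, ENNReal.toReal_prod]
  set E := ∫ y, f y ∂ν with hE
  rcases eq_or_lt_of_le hm with hm0 | hm0
  · -- m = 0 : RHS = 2, LHS ≤ 1
    have : Real.exp (-2 * m ^ 2 / (c ^ 2 * n)) = 1 := by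
      rw [← hm0]; norm_num
    rw [this, mul_one]
    calc ν {x | m ≤ |f x - E|} ≤ 1 := prob_le_one
    _ ≤ ENNReal.ofReal 2 := ENNReal.one_le_ofReal.2 one_le_two
  rcases Nat.eq_zero_or_pos n with hn0 | hn
  · -- n = 0 : the space is a subsingleton, deviation is 0 < m
    subst hn0
    have hsub : Subsingleton (∀ k : Fin 0, A k) := inferInstance
    have hconst : ∀ x : ∀ k : Fin 0, A k, f x = E := by
      intro x
      have : (fun y : (∀ k : Fin 0, A k) => f y) = fun _ => f x := by
        funext y; rw [Subsingleton.elim y x]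
      rw [hE, this, integral_const, probReal_univ, one_smul]
    have hempty : {x : ∀ k : Fin 0, A k | m ≤ |f x - E|} = ∅ := by
      ext x
      simp only [Set.mem_setOf_eq, Set.mem_empty_iff_false, iff_false, not_le]
      rw [hconst x]
      simpa using hm0
    rw [hempty, measure_empty]
    exact zero_le
  -- main case : m > 0, n ≥ 1
  have hnR : (0:ℝ) < n := by exact_mod_cast hn
  set t : ℝ := 4 * m / (c ^ 2 * n) with ht_def
  have ht : 0 < t := by positivity
  have hexp_eq : -t * m + t ^ 2 * c ^ 2 * n / 8 = -2 * m ^ 2 / (c ^ 2 * n) := by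
    rw [ht_def]
    field_simp
    ring
  -- mgf bounds for f - E and E - f
  have hmgf : ∀ g : (∀ k, A k) → ℝ,
      (∀ (x x' : ∀ k, A k) (k : Fin n), (∀ j, j ≠ k → x j = x' j) → |g x - g x'| ≤ c) →
      (∫ x, g x ∂ν) = 0 →
      ProbabilityTheory.mgf g ν t ≤ Real.exp (t ^ 2 * c ^ 2 * n / 8) := by
    intro g hgbd hg0
    have hbound := mcd_mgf n A w hw hw1 g c hc.le hgbd t
    have hmean : ∑ x, (∏ k, w k (x k)) * g x = 0 := by rw [← hint g, hg0]
    rw [hmean, mul_zero, zero_add] at hbound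
    calc ProbabilityTheory.mgf g ν t = ∫ x, Real.exp (t * g x) ∂ν := rfl
    _ = ∑ x, (∏ k, w k (x k)) * Real.exp (t * g x) := hint _
    _ ≤ _ := hbound
  have hfE_int : Integrable f ν := Integrable.of_finite
  have hint_fE : ∫ x, (f x - E) ∂ν = 0 := by
    rw [integral_sub hfE_int (integrable_const E), integral_const, probReal_univ,
      one_smul, hE, sub_self]
  have hint_Ef : ∫ x, (E - f x) ∂ν = 0 := by
    rw [integral_sub (integrable_const E) hfE_int, integral_const, probReal_univ,
      one_smul, hE, sub_self]
  have hbd1 : ∀ (x x' : ∀ k, A k) (k : Fin n), (∀ j, j ≠ k → x j = x' j) →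
      |(f x - E) - (f x' - E)| ≤ c := by
    intro x x' k h
    have := hf x x' k h
    simpa using this
  have hbd2 : ∀ (x x' : ∀ k, A k) (k : Fin n), (∀ j, j ≠ k → x j = x' j) →
      |(E - f x) - (E - f x')| ≤ c := by
    intro x x' k h
    have := hf x' x k (fun j hj => (h j hj).symm)
    have heq : (E - f x) - (E - f x') = f x' - f x := by ring
    rw [heq]
    exact this
  -- Chernoff bounds
  have hch1 : (ν {x | m ≤ f x - E}).toReal ≤ Real.exp (-2 * m ^ 2 / (c ^ 2 * n)) := by
    calc (ν {x | m ≤ f x - E}).toReal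
        ≤ Real.exp (-t * m) * ProbabilityTheory.mgf (fun x => f x - E) ν t :=
          ProbabilityTheory.measure_ge_le_exp_mul_mgf m ht.le Integrable.of_finite
    _ ≤ Real.exp (-t * m) * Real.exp (t ^ 2 * c ^ 2 * n / 8) :=
          mul_le_mul_of_nonneg_left (hmgf _ hbd1 hint_fE) (Real.exp_pos _).le
    _ = Real.exp (-2 * m ^ 2 / (c ^ 2 * n)) := by rw [← Real.exp_add, hexp_eq]
  have hch2 : (ν {x | m ≤ E - f x}).toReal ≤ Real.exp (-2 * m ^ 2 / (c ^ 2 * n)) := by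
    calc (ν {x | m ≤ E - f x}).toReal
        ≤ Real.exp (-t * m) * ProbabilityTheory.mgf (fun x => E - f x) ν t :=
          ProbabilityTheory.measure_ge_le_exp_mul_mgf m ht.le Integrable.of_finite
    _ ≤ Real.exp (-t * m) * Real.exp (t ^ 2 * c ^ 2 * n / 8) :=
          mul_le_mul_of_nonneg_left (hmgf _ hbd2 hint_Ef) (Real.exp_pos _).le
    _ = Real.exp (-2 * m ^ 2 / (c ^ 2 * n)) := by rw [← Real.exp_add, hexp_eq]
  -- union bound
  have hsubset : {x : ∀ k, A k | m ≤ |f x - E|} ⊆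
      {x | m ≤ f x - E} ∪ {x | m ≤ E - f x} := by
    intro x hx
    simp only [Set.mem_setOf_eq] at hx
    rcases le_abs.1 hx with h | h
    · exact Or.inl h
    · exact Or.inr (by simpa [neg_sub] using h)
  calc ν {x | m ≤ |f x - E|}
      ≤ ν ({x | m ≤ f x - E} ∪ {x | m ≤ E - f x}) := measure_mono hsubset
  _ ≤ ν {x | m ≤ f x - E} + ν {x | m ≤ E - f x} := measure_union_le _ _
  _ = ENNReal.ofReal ((ν {x | m ≤ f x - E}).toReal + (ν {x | m ≤ E - f x}).toReal) := by
      rw [ENNReal.ofReal_add ENNReal.toReal_nonneg ENNReal.toReal_nonneg,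
        ENNReal.ofReal_toReal (measure_ne_top _ _), ENNReal.ofReal_toReal (measure_ne_top _ _)]
  _ ≤ ENNReal.ofReal (2 * Real.exp (-2 * m ^ 2 / (c ^ 2 * n))) := by
      apply ENNReal.ofReal_le_ofReal
      linarith
end
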